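/- For every integer m ≥ 4 and every n ≥ 1, the inequality H_{n,(2^m,1)}(x) ≥ H_{n,(3,1^{2m−2})}(x) holds for all x ∈ [0,∞)^n. Explicitly: (h_{n,2}(x))^m · h_{n,1}(x) / (C(n+1,2)^m · n) ≥ h_{n,3}(x) · (h_{n,1}(x))^{2m−2} / (C(n+2,3) · n^{2m−2}) for all x ∈ [0,∞)^n. -/

import Mathlib

/-- The complete homogeneous symmetric polynomial `h_{n,k}`, as a function on `ℝ^n`:
the sum of all monomials of total degree `k` in `x 0, …, x (n-1)` (with `h_{n,0} = 1`). -/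
noncomputable def hsym (n k : ℕ) (x : Fin n → ℝ) : ℝ :=
  ∑ d ∈ Finset.Nat.antidiagonalTuple n k, ∏ i, x i ^ d i

/-!
Let `μ = H_{n,1}(x)` be the mean of the `x i`, and `V = ∑ (x i - μ)²`, `T = ∑ (x i - μ)³`.
The power-sum expressions of `h_2` and `h_3` give `H_{n,2} = μ² + b²` with `b² = V / (n (n+1))`
and `H_{n,3} = μ³ + 3 μ b² + 2 T / (n (n+1) (n+2))`. Every deviation satisfies
`(x i - μ)² ≤ V ≤ ((n+2) b)²`, so `T ≤ (n+2) b V` and `H_{n,3} ≤ μ³ + 3 μ b² + 2 b³`. For `μ ≥ 0`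
this yields `H_{n,3} μ⁵ ≤ (μ³ + 3 μ b² + 2 b³) μ⁵ ≤ (μ² + b²)⁴ = H_{n,2}⁴`, which is the case
`m = 4`; larger `m` follow by multiplying with `(μ²)^(m-4) ≤ H_{n,2}^(m-4)`.
-/

open Finset

lemma hsym_zero (n : ℕ) (x : Fin n → ℝ) : hsym n 0 x = 1 := by
  simp [hsym, Finset.Nat.antidiagonalTuple_zero_right]

lemma hsym_succ (n k : ℕ) (x : Fin (n + 1) → ℝ) :
    hsym (n + 1) k x = ∑ p ∈ antidiagonal k, x 0 ^ p.1 * hsym n p.2 (Fin.tail x) := by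
  simp_rw [hsym, mul_sum]
  rw [sum_sigma']
  refine sum_nbij' (fun d => ⟨(d 0, ∑ i, Fin.tail d i), Fin.tail d⟩)
    (fun p => Fin.cons p.1.1 p.2) ?_ ?_ (fun d _ => Fin.cons_self_tail d) ?_ ?_
  · intro d hd
    simpa [Nat.mem_antidiagonalTuple, Fin.sum_univ_succ, Fin.tail] using hd
  · rintro ⟨⟨a, b⟩, e⟩ he
    simp_all [Nat.mem_antidiagonalTuple, Fin.sum_cons]
  · rintro ⟨⟨a, b⟩, e⟩ he
    simp_all [Nat.mem_antidiagonalTuple]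
  · intro d _
    simp [Fin.prod_univ_succ, Fin.tail]

lemma hsym_one (n : ℕ) (x : Fin n → ℝ) : hsym n 1 x = ∑ i, x i := by
  induction n with
  | zero => simp [hsym]
  | succ n ih =>
    rw [hsym_succ, Nat.sum_antidiagonal_eq_sum_range_succ_mk]
    simp [sum_range_succ, ih, hsym_zero, Fin.sum_univ_succ, Fin.tail, add_comm]

lemma hsym_two (n : ℕ) (x : Fin n → ℝ) :
    hsym n 2 x = ((∑ i, x i) ^ 2 + ∑ i, x i ^ 2) / 2 := by
  induction n with
  | zero => simp [hsym]
  | succ n ih =>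
    rw [hsym_succ, Nat.sum_antidiagonal_eq_sum_range_succ_mk]
    simp only [sum_range_succ, sum_range_zero, Nat.reduceSub]
    rw [ih, hsym_one, hsym_zero]
    simp only [Fin.sum_univ_succ, Fin.tail]
    ring

lemma hsym_three (n : ℕ) (x : Fin n → ℝ) :
    hsym n 3 x = ((∑ i, x i) ^ 3 + 3 * (∑ i, x i) * (∑ i, x i ^ 2) + 2 * ∑ i, x i ^ 3) / 6 := by
  induction n with
  | zero => simp [hsym]
  | succ n ih =>
    rw [hsym_succ, Nat.sum_antidiagonal_eq_sum_range_succ_mk]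
    simp only [sum_range_succ, sum_range_zero, Nat.reduceSub]
    rw [ih, hsym_two, hsym_one, hsym_zero]
    simp only [Fin.sum_univ_succ, Fin.tail]
    ring

noncomputable def hsymNorm (n k : ℕ) (x : Fin n → ℝ) : ℝ :=
  hsym n k x / ((n + k - 1).choose k : ℝ)

lemma cast_choose_three_add_two (n : ℕ) :
    ((n + 2).choose 3 : ℝ) = n * (n + 1) * (n + 2) / 6 := by
  have h : ((n + 2) * (n + 1).choose 2 : ℝ) = (n + 2).choose 3 * 3 := by
    exact_mod_cast Nat.add_one_mul_choose_eq (n + 1) 2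
  rw [Nat.cast_choose_two] at h
  push_cast at h
  linear_combination -h / 3

section

variable {ι R : Type*} [CommRing R] (s : Finset ι) (f : ι → R) (c : R)

lemma sum_sub_sq_eq :
    ∑ i ∈ s, (f i - c) ^ 2 = ∑ i ∈ s, f i ^ 2 - 2 * c * ∑ i ∈ s, f i + #s * c ^ 2 := by
  have h (i : ι) : (f i - c) ^ 2 = f i ^ 2 - 2 * c * f i + c ^ 2 := by ring
  simp [h, sum_add_distrib, sum_sub_distrib, mul_sum]

lemma sum_sub_pow_three_eq :
    ∑ i ∈ s, (f i - c) ^ 3 =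
      ∑ i ∈ s, f i ^ 3 - 3 * c * ∑ i ∈ s, f i ^ 2 + 3 * c ^ 2 * ∑ i ∈ s, f i - #s * c ^ 3 := by
  have h (i : ι) : (f i - c) ^ 3 = f i ^ 3 - 3 * c * f i ^ 2 + 3 * c ^ 2 * f i - c ^ 3 := by ring
  simp [h, sum_add_distrib, sum_sub_distrib, mul_sum]

end

section

variable {n : ℕ} (x : Fin n → ℝ)

lemma hsymNorm_one : hsymNorm n 1 x = (∑ i, x i) / n := by
  simp [hsymNorm, hsym_one]

lemma hsymNorm_two (hn : 0 < n) :
    hsymNorm n 2 x = hsymNorm n 1 x ^ 2 + (∑ i, (x i - hsymNorm n 1 x) ^ 2) / (n * (n + 1)) := by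
  rw [sum_sub_sq_eq, hsymNorm_one, hsymNorm, hsym_two, Nat.cast_choose_two]
  simp only [Nat.add_one_sub_one, Nat.cast_add, Nat.cast_one, add_sub_cancel_right, card_univ,
    Fintype.card_fin]
  field_simp
  ring

lemma hsymNorm_three (hn : 0 < n) :
    hsymNorm n 3 x = hsymNorm n 1 x ^ 3
      + 3 * hsymNorm n 1 x * (∑ i, (x i - hsymNorm n 1 x) ^ 2) / (n * (n + 1))
      + 2 * (∑ i, (x i - hsymNorm n 1 x) ^ 3) / (n * (n + 1) * (n + 2)) := by
  rw [sum_sub_sq_eq, sum_sub_pow_three_eq, hsymNorm_one, hsymNorm, hsym_three,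
    show n + 3 - 1 = n + 2 from rfl, cast_choose_three_add_two]
  simp only [card_univ, Fintype.card_fin]
  field_simp
  ring

end

lemma sum_pow_three_le_mul_sum_sq {ι : Type*} (s : Finset ι) (y : ι → ℝ) {w : ℝ}
    (hy : ∀ i ∈ s, y i ≤ w) : ∑ i ∈ s, y i ^ 3 ≤ w * ∑ i ∈ s, y i ^ 2 := by
  rw [mul_sum]
  refine sum_le_sum fun i hi => ?_
  calc y i ^ 3 = y i * y i ^ 2 := by ring
    _ ≤ w * y i ^ 2 := mul_le_mul_of_nonneg_right (hy i hi) (sq_nonneg _)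

lemma mul_pow_five_le_sq_add_sq_pow_four (a b : ℝ) :
    (a ^ 3 + 3 * a * b ^ 2 + 2 * b ^ 3) * a ^ 5 ≤ (a ^ 2 + b ^ 2) ^ 4 := by
  have h : (a ^ 2 + b ^ 2) ^ 4 - (a ^ 3 + 3 * a * b ^ 2 + 2 * b ^ 3) * a ^ 5
      = a ^ 4 * b ^ 2 * ((a - b) ^ 2 + 5 * b ^ 2) + 4 * a ^ 2 * b ^ 6 + b ^ 8 := by ring
  rw [← sub_nonneg, h]
  positivity

lemma mul_pow_le_pow_mul_of_sq_le {A B C : ℝ} {m : ℕ} (hm : 4 ≤ m) (hA : 0 ≤ A) (hAB : A ^ 2 ≤ B)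
    (h : C * A ^ 5 ≤ B ^ 4) : C * A ^ (2 * m - 2) ≤ B ^ m * A := by
  obtain ⟨k, rfl⟩ := Nat.exists_eq_add_of_le hm
  calc C * A ^ (2 * (4 + k) - 2) = C * A ^ 5 * ((A ^ 2) ^ k * A) := by
        rw [show 2 * (4 + k) - 2 = 5 + 2 * k + 1 by omega]; ring
    _ ≤ B ^ 4 * (B ^ k * A) := by gcongr
    _ = B ^ (4 + k) * A := by ring

section

variable {n : ℕ} (x : Fin n → ℝ)

lemma sq_hsymNorm_one_le_hsymNorm_two (hn : 0 < n) : hsymNorm n 1 x ^ 2 ≤ hsymNorm n 2 x := by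
  rw [hsymNorm_two x hn, le_add_iff_nonneg_right]
  positivity

lemma hsymNorm_three_le (hn : 0 < n) :
    hsymNorm n 3 x ≤ hsymNorm n 1 x ^ 3
      + 3 * hsymNorm n 1 x * √(hsymNorm n 2 x - hsymNorm n 1 x ^ 2) ^ 2
      + 2 * √(hsymNorm n 2 x - hsymNorm n 1 x ^ 2) ^ 3 := by
  have hb : √(hsymNorm n 2 x - hsymNorm n 1 x ^ 2) ^ 2
      = (∑ i, (x i - hsymNorm n 1 x) ^ 2) / (n * (n + 1)) := by
    rw [Real.sq_sqrt (sub_nonneg.2 (sq_hsymNorm_one_le_hsymNorm_two x hn)), hsymNorm_two x hn,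
      add_sub_cancel_left]
  rw [hsymNorm_three x hn]
  set μ := hsymNorm n 1 x
  set b := √(hsymNorm n 2 x - μ ^ 2)
  set V := ∑ i, (x i - μ) ^ 2
  have hV : V = n * (n + 1) * b ^ 2 := by rw [hb]; field_simp
  have hdev : ∀ i ∈ univ, x i - μ ≤ (n + 2) * b := by
    intro i _
    have hi : (x i - μ) ^ 2 ≤ V := single_le_sum (f := fun j => (x j - μ) ^ 2)
      (fun j _ => sq_nonneg _) (mem_univ i)
    have hsq : (x i - μ) ^ 2 ≤ ((n + 2) * b) ^ 2 := by nlinarith [sq_nonneg b]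
    exact (abs_le_of_sq_le_sq' hsq (by positivity)).2
  have hT : (∑ i, (x i - μ) ^ 3) / (n * (n + 1) * (n + 2)) ≤ b ^ 3 := by
    rw [div_le_iff₀ (by positivity)]
    calc ∑ i, (x i - μ) ^ 3 ≤ (n + 2) * b * V := sum_pow_three_le_mul_sum_sq univ _ hdev
      _ = b ^ 3 * (n * (n + 1) * (n + 2)) := by rw [hV]; ring
  rw [hb, mul_div_assoc, mul_div_assoc 2]
  linarith

lemma hsymNorm_three_mul_pow_five_le (hn : 0 < n) (hμ : 0 ≤ hsymNorm n 1 x) :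
    hsymNorm n 3 x * hsymNorm n 1 x ^ 5 ≤ hsymNorm n 2 x ^ 4 := by
  have h3 := hsymNorm_three_le x hn
  have hb := Real.sq_sqrt (sub_nonneg.2 (sq_hsymNorm_one_le_hsymNorm_two x hn))
  set μ := hsymNorm n 1 x
  set b := √(hsymNorm n 2 x - μ ^ 2)
  calc hsymNorm n 3 x * μ ^ 5 ≤ (μ ^ 3 + 3 * μ * b ^ 2 + 2 * b ^ 3) * μ ^ 5 := by gcongr
    _ ≤ (μ ^ 2 + b ^ 2) ^ 4 := mul_pow_five_le_sq_add_sq_pow_four μ b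
    _ = hsymNorm n 2 x ^ 4 := by rw [hb]; ring

end

/-- For every `m ≥ 4` and `n ≥ 1`, `H_{n,(2^m,1)} ≥ H_{n,(3,1^{2m−2})}` on `[0,∞)^n`:
explicitly,
`h_{n,2}^m·h_{n,1} / (C(n+1,2)^m·n) ≥ h_{n,3}·h_{n,1}^{2m−2} / (C(n+2,3)·n^{2m−2})`. -/
theorem H_two_pow_m_one_ge (m n : ℕ) (hm : 4 ≤ m) (hn : 1 ≤ n)
    (x : Fin n → ℝ) (hx : ∀ i, 0 ≤ x i) :
    hsym n 3 x * (hsym n 1 x) ^ (2 * m - 2) /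
        (((n + 2).choose 3 : ℝ) * (n : ℝ) ^ (2 * m - 2)) ≤
      (hsym n 2 x) ^ m * hsym n 1 x / ((((n + 1).choose 2 : ℝ)) ^ m * (n : ℝ)) := by
  have hμ : 0 ≤ hsymNorm n 1 x := by
    rw [hsymNorm_one]; exact div_nonneg (sum_nonneg fun i _ => hx i) (Nat.cast_nonneg n)
  have h := mul_pow_le_pow_mul_of_sq_le hm hμ (sq_hsymNorm_one_le_hsymNorm_two x hn)
    (hsymNorm_three_mul_pow_five_le x hn hμ)
  simp only [hsymNorm, div_pow, div_mul_div_comm] at h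
  simpa using h
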